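/- arXiv:2605.13533 — 11 statements merged into one kernel-verified Lean document; each statement's English description precedes it below -/
import Mathlib

section
/- Let T be a monad on Type u and α : Fin m → Fin n a function. The following are equivalent: (1) for every family of types X : Fin n → Type u and every p : (i : Fin n) → T (X i), one has (fun v => fun i => v (α i)) <$> ψ^Π p = ψ^Π (fun i => p (α i)); (2) T is α-commutative, i.e., for every single type X and every p : Fin n → T X, one has (fun v => v ∘ α) <$> ψ⁽ⁿ⁾ p = ψ⁽ᵐ⁾ (p ∘ α). -/
/-!
On a constant family `ψ^Π` is `ψ⁽ⁿ⁾`, which gives one direction. Conversely, tag each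
component with its index: `ψ^Π p` becomes `ψ⁽ⁿ⁾` of the family `i ↦ (⟨i, ·⟩ <$> p i)` of a single
type `Σ i, X i`, by naturality of `ψ^Π`, so `α`-commutativity yields the reindexing identity after
this tagging. The tagging is injective, and `<$>` along an injective map is injective in any lawful
monad, since an injection has a left inverse in the Kleisli category.
-/

universe u

/-- The canonical "double strength" `ψ` of a monad: first `p`, then `q`. -/
def monadPsi {T : Type u → Type u} [Monad T] {X Y : Type u} (p : T X) (q : T Y) :
    T (X × Y) := do
  let x ← p
  let y ← q
  pure (x, y)

/-- The reversed double strength `ψ'` of a monad: first `q`, then `p`. -/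
def monadPsi' {T : Type u → Type u} [Monad T] {X Y : Type u} (p : T X) (q : T Y) :
    T (X × Y) := do
  let y ← q
  let x ← p
  pure (x, y)

/-- The `n`-ary sequencing map `ψ⁽ⁿ⁾ : (Fin n → T X) → T (Fin n → X)`. -/
def monadPsiN {T : Type u → Type u} [Monad T] {X : Type u} :
    (n : ℕ) → (Fin n → T X) → T (Fin n → X)
  | 0, _ => pure Fin.elim0
  | n + 1, p => do
    let x ← p 0
    let v ← monadPsiN n (p ∘ Fin.succ)
    pure (Fin.cons x v)

/-- `T` is `α`-commutative for a function `α : Fin m → Fin n`. -/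
def AlphaCommutative (T : Type u → Type u) [Monad T] {m n : ℕ} (α : Fin m → Fin n) : Prop :=
  ∀ (X : Type u) (p : Fin n → T X),
    (fun v => v ∘ α) <$> monadPsiN n p = monadPsiN m (p ∘ α)

/-- `T` is commutative. -/
def MonadIsCommutative (T : Type u → Type u) [Monad T] : Prop :=
  ∀ (X Y : Type u) (p : T X) (q : T Y), monadPsi p q = monadPsi' p q

/-- `T` is affine. -/
def MonadIsAffine (T : Type u → Type u) [Monad T] : Prop :=
  ∀ (X : Type u) (p : T X),
    (fun _ => PUnit.unit.{u + 1}) <$> p = (pure PUnit.unit.{u + 1} : T PUnit.{u + 1})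

/-- `T` is relevant. -/
def MonadIsRelevant (T : Type u → Type u) [Monad T] : Prop :=
  ∀ (X : Type u) (p : T X), monadPsi p p = (fun x : X => (x, x)) <$> p

/-- The dependent `n`-ary sequencing map `ψ^Π`. -/
def monadPsiPi {T : Type u → Type u} [Monad T] :
    {n : ℕ} → {X : Fin n → Type u} → ((i : Fin n) → T (X i)) → T ((i : Fin n) → X i)
  | 0, _, _ => pure fun i => i.elim0
  | _ + 1, _, p => do
    let x ← p 0
    let v ← monadPsiPi fun i => p i.succ
    pure (Fin.cons x v)

open Function

theorem LawfulMonad.map_injective {T : Type u → Type u} [Monad T] [LawfulMonad T] {A B : Type u}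
    {f : A → B} (hf : Injective f) : Injective (Functor.map f : T A → T B) := by
  intro s t hst
  classical
  let g : B → T A := fun b => if h : ∃ a, f a = b then pure h.choose else t
  have hgf : ∀ a, g (f a) = pure a := fun a => by
    have h : ∃ a', f a' = f a := ⟨a, rfl⟩
    simp only [g, dif_pos h, hf h.choose_spec]
  calc s = s >>= fun a => g (f a) := by simp only [hgf, bind_pure]
    _ = (f <$> t) >>= g := by rw [← hst, bind_map_left]
    _ = t := by simp only [bind_map_left, hgf, bind_pure]

theorem monadPsiPi_const {T : Type u → Type u} [Monad T] {X : Type u} :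
    ∀ (n : ℕ) (p : Fin n → T X), monadPsiPi (X := fun _ => X) p = monadPsiN n p
  | 0, _ => rfl
  | n + 1, p => by
    simp only [monadPsiPi, monadPsiN, monadPsiPi_const n]
    rfl

theorem monadPsiPi_map {T : Type u → Type u} [Monad T] [LawfulMonad T] :
    ∀ {n : ℕ} {X Y : Fin n → Type u} (f : (i : Fin n) → X i → Y i) (p : (i : Fin n) → T (X i)),
      monadPsiPi (fun i => f i <$> p i) = (fun v i => f i (v i)) <$> monadPsiPi p
  | 0, _, _, _, _ => by
    simp only [monadPsiPi, map_pure]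
    exact congrArg pure (funext fun i => i.elim0)
  | n + 1, _, _, f, p => by
    simp only [monadPsiPi, map_bind, bind_map_left, bind_pure_comp, Functor.map_map,
      monadPsiPi_map (fun i => f i.succ) (fun i => p i.succ)]
    refine bind_congr fun x => congrArg (· <$> _) (funext fun v => funext fun i => ?_)
    induction i using Fin.cases <;> simp

/-- For a monad `T` and `α : Fin m → Fin n`, the dependent
reindexing condition for `ψ^Π` is equivalent to `α`-commutativity. -/
theorem psiPi_reindex_iff_alphaCommutative
    {T : Type u → Type u} [Monad T] [LawfulMonad T] {m n : ℕ} (α : Fin m → Fin n) :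
    (∀ (X : Fin n → Type u) (p : (i : Fin n) → T (X i)),
        (fun v : (i : Fin n) → X i => fun i : Fin m => v (α i)) <$> monadPsiPi p =
          monadPsiPi (fun i : Fin m => p (α i))) ↔
      AlphaCommutative T α := by
  refine ⟨fun h X p => ?_, fun hα X p => ?_⟩
  · rw [← monadPsiPi_const, ← monadPsiPi_const]
    exact h (fun _ => X) p
  · let tag : ((j : Fin m) → X (α j)) → Fin m → Σ i, X i := fun w j => ⟨α j, w j⟩
    have htag : Injective tag := fun w w' h =>
      funext fun j => eq_of_heq (Sigma.mk.inj_iff.mp (congrFun h j)).2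
    apply LawfulMonad.map_injective htag
    have hsigma := hα (Σ i, X i) (fun i => Sigma.mk i <$> p i)
    rw [← monadPsiPi_const, ← monadPsiPi_const, monadPsiPi_map (fun i => Sigma.mk i) p] at hsigma
    rw [Functor.map_map] at hsigma ⊢
    exact hsigma.trans (monadPsiPi_map (fun j => Sigma.mk (α j)) (fun j => p (α j)))
end

section
/- For a monad T on Type u, the following are equivalent: (1) T is affine, i.e., (fun _ => PUnit.unit) <$> p = pure PUnit.unit for every X and p : T X; (2) for all types X, Y and all p : T X, q : T Y, one has Prod.fst <$> ψ p q = p and Prod.snd <$> ψ p q = q; (3) every element t : T PUnit equals pure PUnit.unit (i.e., T preserves the terminal object). -/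
universe u

/-- For a monad `T` on `Type u`, the following are equivalent:
(1) `T` is affine; (2) `ψ p q` projects back to `p` and `q`;
(3) `T` preserves the terminal object. -/
theorem affine_tfae {T : Type u → Type u} [Monad T] [LawfulMonad T] :
    List.TFAE
      [ ∀ (X : Type u) (p : T X),
          (fun _ => PUnit.unit.{u+1}) <$> p = (pure PUnit.unit.{u+1} : T PUnit.{u+1}),
        ∀ (X Y : Type u) (p : T X) (q : T Y),
          (Prod.fst : X × Y → X) <$> monadPsi p q = p ∧ (Prod.snd : X × Y → Y) <$> monadPsi p q = q,
        ∀ t : T PUnit.{u+1}, t = pure PUnit.unit.{u+1} ] := by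
  tfae_have 1 → 3 := by
    intro h t
    have h1 := h PUnit.{u+1} t
    have : (fun _ : PUnit.{u+1} => PUnit.unit.{u+1}) = id := funext fun x => by cases x; rfl
    rwa [this, id_map] at h1
  tfae_have 3 → 2 := by
    intro h X Y p q
    constructor
    · have hq : ((fun _ : Y => PUnit.unit.{u+1}) <$> q) = pure PUnit.unit.{u+1} :=
        h _
      calc (Prod.fst : X × Y → X) <$> monadPsi p q
          = p >>= fun x => q >>= fun _ => pure x := by
            simp [monadPsi, map_bind]
        _ = p >>= fun x => ((fun _ : Y => PUnit.unit.{u+1}) <$> q) >>= fun _ => pure x := by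
            simp only [map_eq_pure_bind, bind_assoc, pure_bind]
        _ = p := by rw [hq]; simp
    · have hp : ((fun _ : X => PUnit.unit.{u+1}) <$> p) = pure PUnit.unit.{u+1} :=
        h _
      calc (Prod.snd : X × Y → Y) <$> monadPsi p q
          = p >>= fun _ => q := by
            simp [monadPsi, map_bind]
        _ = ((fun _ : X => PUnit.unit.{u+1}) <$> p) >>= fun _ => q := by
            simp only [map_eq_pure_bind, bind_assoc, pure_bind]
        _ = q := by rw [hp]; simp
  tfae_have 2 → 1 := by
    intro h X p
    have h2 := (h X PUnit.{u+1} p (pure PUnit.unit.{u+1})).2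
    simpa [monadPsi, map_bind] using h2
  tfae_finish
end

section
/- For a monad T on Type u, the following are equivalent: (1) T is commutative, i.e., ψ p q = ψ' p q for all X, Y, p : T X, q : T Y; (2) ψ is symmetric: Prod.swap <$> ψ p q = ψ q p for all p : T X, q : T Y; (3) join is a monoidal natural transformation: ψ (join p) (join q) = join ((fun z => ψ z.1 z.2) <$> ψ p q) for all p : T (T X) and q : T (T Y). -/
universe u

/-- `join` of a monad. -/
def monadJoin {T : Type u → Type u} [Monad T] {X : Type u} (p : T (T X)) : T X :=
  p >>= id


lemma comm_bind {T : Type u → Type u} [Monad T] [LawfulMonad T]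
    (h : MonadIsCommutative T) {X Y Z : Type u} (p : T X) (q : T Y) (k : X → Y → T Z) :
    (p >>= fun x => q >>= fun y => k x y) = (q >>= fun y => p >>= fun x => k x y) := by
  have := congrArg (fun r => r >>= fun z : X × Y => k z.1 z.2) (h X Y p q)
  simpa [monadPsi, monadPsi', bind_assoc] using this

set_option maxRecDepth 10000 in
set_option maxHeartbeats 1000000 in
/-- For a monad `T`, the following are equivalent:
(1) `T` is commutative; (2) `ψ` is symmetric; (3) `join` is a monoidal natural
transformation. -/
theorem commutative_tfae {T : Type u → Type u} [Monad T] [LawfulMonad T] :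
    List.TFAE
      [ MonadIsCommutative T,
        ∀ (X Y : Type u) (p : T X) (q : T Y),
          (Prod.swap : X × Y → Y × X) <$> monadPsi p q = monadPsi q p,
        ∀ (X Y : Type u) (p : T (T X)) (q : T (T Y)),
          monadPsi (monadJoin p) (monadJoin q) =
            monadJoin ((fun z : T X × T Y => monadPsi z.1 z.2) <$> monadPsi p q) ] := by
  tfae_have 1 → 2 := by
    intro h X Y p q
    have := h Y X q p
    simp only [monadPsi, monadPsi'] at this ⊢
    rw [this]
    simp only [map_eq_pure_bind, bind_assoc, pure_bind, Prod.swap_prod_mk]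
  tfae_have 2 → 1 := by
    intro h X Y p q
    have h1 := h Y X q p
    rw [← h1]
    simp only [monadPsi, monadPsi', map_eq_pure_bind, bind_assoc, pure_bind, Prod.swap_prod_mk]
  tfae_have 1 → 3 := by
    intro h X Y p q
    simp only [monadPsi, monadJoin, map_eq_pure_bind, bind_assoc, id, pure_bind]
    refine bind_congr fun p' => ?_
    exact comm_bind h p' q _
  tfae_have 3 → 1 := by
    intro h X Y p q
    have := h X Y (pure p) ((fun y : Y => (pure y : T Y)) <$> q)
    simpa only [monadPsi, monadPsi', monadJoin, map_eq_pure_bind, bind_assoc, pure_bind, id] using this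
  tfae_finish
end

section
/- For a monad T on Type u, the following are equivalent: (1) T is relevant, i.e., ψ p p = (fun x => (x, x)) <$> p for every X and p : T X; (2) for all types X, Y and every t : T (X × Y), ψ (Prod.fst <$> t) (Prod.snd <$> t) = t; (3) condition (2) restricted to the case Y = X, i.e., for every X and every t : T (X × X), ψ (Prod.fst <$> t) (Prod.snd <$> t) = t. -/
universe u

lemma monadPsi_map {T : Type u → Type u} [Monad T] [LawfulMonad T] {X Y X' Y' : Type u}
    (f : X → X') (g : Y → Y') (p : T X) (q : T Y) :
    monadPsi (f <$> p) (g <$> q) = Prod.map f g <$> monadPsi p q := by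
  simp only [monadPsi, map_eq_pure_bind, bind_assoc, pure_bind, Prod.map_apply]

/-- For a monad `T`, the following are equivalent:
(1) `T` is relevant; (2) every `t : T (X × Y)` is recovered from its projections via `ψ`;
(3) condition (2) restricted to `Y = X`. -/
theorem relevant_tfae {T : Type u → Type u} [Monad T] [LawfulMonad T] :
    List.TFAE
      [ MonadIsRelevant T,
        ∀ (X Y : Type u) (t : T (X × Y)),
          monadPsi ((Prod.fst : X × Y → X) <$> t) ((Prod.snd : X × Y → Y) <$> t) = t,
        ∀ (X : Type u) (t : T (X × X)),
          monadPsi ((Prod.fst : X × X → X) <$> t) ((Prod.snd : X × X → X) <$> t) = t ] := by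
  tfae_have 1 → 2 := by
    intro h X Y t
    rw [monadPsi_map, h _ t]
    simp [← comp_map, Function.comp_def]
  tfae_have 2 → 3 := fun h X t => h X X t
  tfae_have 3 → 1 := by
    intro h X p
    have := h X ((fun x : X => (x, x)) <$> p)
    simpa [← comp_map, Function.comp_def] using this
  tfae_finish
end

section
/- Every monad T on Type u that is both affine and relevant is commutative: if (fun _ => PUnit.unit) <$> p = pure PUnit.unit for every X and p : T X, and ψ p p = (fun x => (x, x)) <$> p for every X and p : T X, then ψ p q = ψ' p q for all X, Y, p : T X, q : T Y. -/
universe u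

/-- Every monad that is both affine and relevant is commutative. -/
theorem commutative_of_affine_of_relevant
    {T : Type u → Type u} [Monad T] [LawfulMonad T]
    (haff : MonadIsAffine T) (hrel : MonadIsRelevant T) :
    MonadIsCommutative T := by
  have hdiscard : ∀ {X β : Type u} (p : T X) (m : T β), (p >>= fun _ => m) = m := by
    intro X β p m
    have h : (((fun _ => PUnit.unit.{u+1}) <$> p) >>= fun _ => m) = m := by
      rw [haff X p, pure_bind]
    simpa only [map_eq_pure_bind, bind_assoc, pure_bind] using h
    
  intro X Y p q
  have h := hrel (X × Y) (monadPsi p q)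
  have h2 := congrArg
    (fun t => (fun ab : (X × Y) × (X × Y) => (ab.2.1, ab.1.2)) <$> t) h
  simp only [monadPsi, monadPsi', map_eq_pure_bind, bind_assoc, pure_bind] at h2 ⊢
  simpa [hdiscard] using h2.symm
end

section
/- For a monad T on Type u, the following are equivalent (T is then called hyperaffine): (1) T is affine and relevant; (2) T is commutative, affine, and relevant; (3) T preserves finite products: every t : T PUnit equals pure PUnit.unit, and for all types X, Y the map T (X × Y) → T X × T Y sending t to (Prod.fst <$> t, Prod.snd <$> t) is bijective; (4) T preserves powers by 0 and 2: every t : T PUnit equals pure PUnit.unit, and for every type X the map T (X × X) → T X × T X sending t to (Prod.fst <$> t, Prod.snd <$> t) is bijective. -/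
universe u

section Helpers

variable {T : Type u → Type u} [Monad T] [LawfulMonad T]

/-- An affine monad lets us discard a computation. -/
lemma affine_discard (hT : MonadIsAffine T) {X Y : Type u} (p : T X) (r : T Y) :
    (p >>= fun _ => r) = r := by
  have h1 : (p >>= fun _ => r) = ((fun _ => PUnit.unit.{u + 1}) <$> p) >>= fun _ => r := by
    rw [bind_map_left]
  rw [h1, hT X p, pure_bind]

/-- Relevance implies every `t : T (X × Y)` is recovered from its projections. -/
lemma relevant_recover (hR : MonadIsRelevant T) {X Y : Type u} (t : T (X × Y)) :
    monadPsi ((Prod.fst : X × Y → X) <$> t) ((Prod.snd : X × Y → Y) <$> t) = t := by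
  have h := congrArg
    (fun s => (fun ab : (X × Y) × (X × Y) => (ab.1.1, ab.2.2)) <$> s) (hR (X × Y) t)
  simp only [monadPsi, map_bind, map_pure, Functor.map_map] at h
  simp only [monadPsi, bind_map_left]
  simpa using h

lemma fst_psi (hA : MonadIsAffine T) {X Y : Type u} (p : T X) (q : T Y) :
    (Prod.fst : X × Y → X) <$> monadPsi p q = p := by
  simp only [monadPsi, map_bind, map_pure]
  have : ∀ x : X, (q >>= fun _ => (pure x : T X)) = pure x := fun x => affine_discard hA q _
  simp only [this]
  exact bind_pure p

lemma snd_psi (hA : MonadIsAffine T) {X Y : Type u} (p : T X) (q : T Y) :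
    (Prod.snd : X × Y → Y) <$> monadPsi p q = q := by
  simp only [monadPsi, map_bind, map_pure]
  simp only [bind_pure]
  exact affine_discard hA p q

lemma fst_psi' (hA : MonadIsAffine T) {X Y : Type u} (p : T X) (q : T Y) :
    (Prod.fst : X × Y → X) <$> monadPsi' p q = p := by
  simp only [monadPsi', map_bind, map_pure]
  simp only [bind_pure]
  exact affine_discard hA q p

lemma snd_psi' (hA : MonadIsAffine T) {X Y : Type u} (p : T X) (q : T Y) :
    (Prod.snd : X × Y → Y) <$> monadPsi' p q = q := by
  simp only [monadPsi', map_bind, map_pure]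
  have : ∀ y : Y, (p >>= fun _ => (pure y : T Y)) = pure y := fun y => affine_discard hA p _
  simp only [this]
  exact bind_pure q

end Helpers

/-- For a monad `T`, the following are equivalent (`T` is then called
hyperaffine): (1) `T` is affine and relevant; (2) `T` is commutative, affine, and
relevant; (3) `T` preserves finite products; (4) `T` preserves powers by `0` and `2`. -/
theorem hyperaffine_tfae {T : Type u → Type u} [Monad T] [LawfulMonad T] :
    List.TFAE
      [ MonadIsAffine T ∧ MonadIsRelevant T,
        MonadIsCommutative T ∧ MonadIsAffine T ∧ MonadIsRelevant T,
        (∀ t : T PUnit.{u + 1}, t = pure PUnit.unit.{u + 1}) ∧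
          ∀ (X Y : Type u), Function.Bijective
            (fun t : T (X × Y) => ((Prod.fst : X × Y → X) <$> t, (Prod.snd : X × Y → Y) <$> t)),
        (∀ t : T PUnit.{u + 1}, t = pure PUnit.unit.{u + 1}) ∧
          ∀ (X : Type u), Function.Bijective
            (fun t : T (X × X) => ((Prod.fst : X × X → X) <$> t, (Prod.snd : X × X → X) <$> t)) ] := by
    -- 2 → 1
  tfae_have 2 → 1 := fun h => ⟨h.2.1, h.2.2⟩
  -- 1 → 3
  tfae_have 1 → 3 := by
    rintro ⟨hA, hR⟩
    refine ⟨fun t => ?_, fun X Y => ⟨fun t t' h => ?_, fun pq => ?_⟩⟩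
    · have := hA PUnit t
      have he : (fun _ : PUnit.{u + 1} => PUnit.unit.{u + 1}) = id := by
        funext x; cases x; rfl
      rwa [he, id_map] at this
    · have h1 := relevant_recover hR t
      have h2 := relevant_recover hR t'
      rw [← h1, ← h2]
      have e1 : (Prod.fst : X × Y → X) <$> t = (Prod.fst : X × Y → X) <$> t' :=
        congrArg Prod.fst h
      have e2 : (Prod.snd : X × Y → Y) <$> t = (Prod.snd : X × Y → Y) <$> t' :=
        congrArg Prod.snd h
      rw [e1, e2]
    · exact ⟨monadPsi pq.1 pq.2, by simp [fst_psi hA, snd_psi hA]⟩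
  -- 3 → 4
  tfae_have 3 → 4 := fun h => ⟨h.1, fun X => h.2 X X⟩
  -- 4 → 1
  tfae_have 4 → 1 := by
    rintro ⟨hu, hb⟩
    have hA : MonadIsAffine T := fun X p => hu _
    refine ⟨hA, fun X p => (hb X).1 ?_⟩
    simp only
    rw [fst_psi hA, snd_psi hA, Functor.map_map, Functor.map_map]
    simp
  -- 3 → 2
  tfae_have 3 → 2 := by
    rintro ⟨hu, hb⟩
    have hA : MonadIsAffine T := fun X p => hu _
    have hR : MonadIsRelevant T := by
      intro X p
      apply (hb X X).1
      simp only
      rw [fst_psi hA, snd_psi hA, Functor.map_map, Functor.map_map]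
      simp
    refine ⟨fun X Y p q => (hb X Y).1 ?_, hA, hR⟩
    simp only
    rw [fst_psi hA, snd_psi hA, fst_psi' hA, snd_psi' hA]
  tfae_finish
end

section
/- A monad T on Type u is α-commutative for every strictly monotone function α : Fin m → Fin n (for all m, n) if and only if T is affine. -/
universe u

theorem map_const_of_affine {T : Type u → Type u} [Monad T] [LawfulMonad T]
    (h : MonadIsAffine T) {X Y : Type u} (p : T X) (c : Y) :
    (fun _ => c) <$> p = pure c := by
  have hc : (fun _ : X => c) = (fun _ : PUnit.{u+1} => c) ∘ (fun _ => PUnit.unit.{u+1}) := rfl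
  calc (fun _ : X => c) <$> p
      = (fun _ : PUnit.{u+1} => c) <$> ((fun _ => PUnit.unit.{u+1}) <$> p) :=
        by rw [Functor.map_map]
    _ = pure c := by rw [h, map_pure]

theorem bind_const_of_affine {T : Type u → Type u} [Monad T] [LawfulMonad T]
    (h : MonadIsAffine T) {X Y : Type u} (p : T X) (q : T Y) :
    (p >>= fun _ => q) = q := by
  have : p >>= (fun _ => q) = ((fun _ => PUnit.unit.{u+1}) <$> p) >>= fun _ => q := by
    rw [bind_map_left]
  rw [this, h, pure_bind]

theorem affine_implies_alphaCommutative {T : Type u → Type u} [Monad T] [LawfulMonad T]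
    (h : MonadIsAffine T) :
    ∀ (n m : ℕ) (α : Fin m → Fin n), StrictMono α → AlphaCommutative T α := by
  intro n
  induction n with
  | zero =>
    intro m α hα X p
    match m with
    | 0 =>
      have he : (Fin.elim0 : Fin 0 → X) ∘ α = Fin.elim0 := by funext i; exact i.elim0
      simp only [monadPsiN, map_pure, he]
    | m + 1 => exact (α 0).elim0
  | succ n ih =>
    intro m α hα X p
    match m with
    | 0 =>
      have he : (fun v : Fin (n+1) → X => v ∘ α) = fun _ => (Fin.elim0 : Fin 0 → X) := by
        funext v; funext i; exact i.elim0
      rw [he, map_const_of_affine h]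
      rfl
    | m + 1 =>
      by_cases h0 : α 0 = 0
      · have hne : ∀ i : Fin m, α i.succ ≠ 0 := by
          intro i hi
          have : α 0 < α i.succ := hα (Fin.succ_pos i)
          rw [h0, hi] at this
          exact lt_irrefl _ this
        set β : Fin m → Fin n := fun i => (α i.succ).pred (hne i) with hβdef
        have hsucc : ∀ i : Fin m, (β i).succ = α i.succ := fun i => Fin.succ_pred _ _
        have hβ : StrictMono β := by
          intro i j hij
          have := hα (Fin.succ_lt_succ_iff.mpr hij)
          rw [← hsucc i, ← hsucc j] at this
          exact Fin.succ_lt_succ_iff.mp this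
        have hcons : ∀ (x : X) (v : Fin n → X), (Fin.cons x v) ∘ α = Fin.cons x (v ∘ β) := by
          intro x v
          funext i
          refine Fin.cases ?_ ?_ i
          · simp [Function.comp, h0]
          · intro j
            simp only [Function.comp_apply, ← hsucc j, Fin.cons_succ]
        have hcomp : (p ∘ Fin.succ) ∘ β = (p ∘ α) ∘ Fin.succ := by
          funext i
          simp only [Function.comp_apply]
          rw [← hsucc i]
        show (fun v => v ∘ α) <$> monadPsiN (n+1) p = monadPsiN (m+1) (p ∘ α)
        simp only [monadPsiN, map_bind, map_pure]
        have : ∀ x : X,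
            (monadPsiN n (p ∘ Fin.succ) >>= fun v => pure (Fin.cons x v ∘ α))
              = monadPsiN m ((p ∘ α) ∘ Fin.succ) >>= fun w => pure (Fin.cons x w) := by
          intro x
          calc (monadPsiN n (p ∘ Fin.succ) >>= fun v => pure (Fin.cons x v ∘ α))
              = (fun v => Fin.cons x (v ∘ β)) <$> monadPsiN n (p ∘ Fin.succ) := by
                rw [← bind_pure_comp]
                simp only [hcons]
            _ = Fin.cons x <$> ((fun v => v ∘ β) <$> monadPsiN n (p ∘ Fin.succ)) := by
                rw [Functor.map_map]
            _ = Fin.cons x <$> monadPsiN m ((p ∘ Fin.succ) ∘ β) := by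
                rw [ih m β hβ X (p ∘ Fin.succ)]
            _ = monadPsiN m ((p ∘ α) ∘ Fin.succ) >>= fun w => pure (Fin.cons x w) := by
                rw [hcomp, bind_pure_comp]
        simp only [this]
        have hp0 : (p ∘ α) 0 = p 0 := by simp [Function.comp, h0]
        rw [hp0]
      · have hpos : (0 : Fin (n+1)) < α 0 := Fin.pos_of_ne_zero h0
        have hne : ∀ i : Fin (m+1), α i ≠ 0 := by
          intro i hi
          have : (0 : Fin (n+1)) < α i := lt_of_lt_of_le hpos (hα.monotone (Fin.zero_le i))
          rw [hi] at this
          exact lt_irrefl _ this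
        set β : Fin (m+1) → Fin n := fun i => (α i).pred (hne i) with hβdef
        have hsucc : ∀ i, (β i).succ = α i := fun i => Fin.succ_pred _ _
        have hβ : StrictMono β := by
          intro i j hij
          have := hα hij
          rw [← hsucc i, ← hsucc j] at this
          exact Fin.succ_lt_succ_iff.mp this
        have hcons : ∀ (x : X) (v : Fin n → X), (Fin.cons x v) ∘ α = v ∘ β := by
          intro x v
          funext i
          simp only [Function.comp_apply, ← hsucc i, Fin.cons_succ]
        have hαβ : p ∘ Fin.succ ∘ β = p ∘ α := by
          funext i
          simp only [Function.comp_apply, hsucc i]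
        show (fun v => v ∘ α) <$> monadPsiN (n+1) p = monadPsiN (m+1) (p ∘ α)
        simp only [monadPsiN, map_bind, map_pure]
        calc (p 0 >>= fun x => monadPsiN n (p ∘ Fin.succ) >>= fun v => pure (Fin.cons x v ∘ α))
            = (p 0 >>= fun _ =>
                monadPsiN n (p ∘ Fin.succ) >>= fun v => pure (v ∘ β)) := by
              simp only [hcons]
          _ = monadPsiN n (p ∘ Fin.succ) >>= fun v => pure (v ∘ β) :=
              bind_const_of_affine h _ _
          _ = (fun v => v ∘ β) <$> monadPsiN n (p ∘ Fin.succ) := bind_pure_comp _ _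
          _ = monadPsiN (m+1) ((p ∘ Fin.succ) ∘ β) := ih (m+1) β hβ X (p ∘ Fin.succ)
          _ = monadPsiN (m+1) (p ∘ α) := by rw [Function.comp_assoc, hαβ]

/-- A monad `T` is `α`-commutative for every strictly monotone
`α : Fin m → Fin n` iff `T` is affine. -/
theorem alphaCommutative_strictMono_iff_affine
    {T : Type u → Type u} [Monad T] [LawfulMonad T] :
    (∀ (m n : ℕ) (α : Fin m → Fin n), StrictMono α → AlphaCommutative T α) ↔
      MonadIsAffine T := by
  constructor
  · intro h X p
    have hmono : StrictMono (fun i : Fin 0 => (i.elim0 : Fin 1)) := fun a => a.elim0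
    have h1 := h 0 1 _ hmono X (fun _ => p)
    simp only [monadPsiN, map_bind, map_pure, bind_pure_comp, Functor.map_map] at h1
    have he : (fun x : X => Fin.cons x Fin.elim0 ∘ fun i : Fin 0 => i.elim0)
        = fun _ : X => (Fin.elim0 : Fin 0 → X) := by
      funext x; funext i; exact i.elim0
    rw [he] at h1
    have h2 := congrArg (Functor.map (fun _ : Fin 0 → X => PUnit.unit.{u+1})) h1
    simpa only [Functor.map_map, map_pure] using h2
  · intro h m n α hα
    exact affine_implies_alphaCommutative h n m α hα
end

section
/- A monad T on Type u is α-commutative for every injective function α : Fin m → Fin n (for all m, n) if and only if T is both commutative and affine. -/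
universe u

/-!
For a commutative monad the sequencing `ψ⁽ⁿ⁺¹⁾ p` may run any coordinate `p i` first and insert
its result at position `i`. An injective `α : Fin (m + 1) → Fin (n + 1)` is "first `α 0`, then
an injective `β` on the remaining coordinates", so induction on `m` reduces everything to `m = 0`,
where affineness discards `ψ⁽ⁿ⁾ p` altogether. Conversely, `α`-commutativity for the empty map
`Fin 0 → Fin 1` is affineness, and for the swap of `Fin 2` it is commutativity for two computations
of one type; computations of types `X` and `Y` are compared inside `X ⊕ Y`.
-/

section

variable {T : Type u → Type u} [Monad T] [LawfulMonad T]

omit [LawfulMonad T] in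
theorem monadPsiN_succ {X : Type u} {n : ℕ} (p : Fin (n + 1) → T X) :
    monadPsiN (n + 1) p =
      p 0 >>= fun x => monadPsiN n (p ∘ Fin.succ) >>= fun v => pure (Fin.cons x v) :=
  rfl

theorem monadPsiN_two {X : Type u} (p : Fin 2 → T X) :
    monadPsiN 2 p = p 0 >>= fun x => p 1 >>= fun y => pure ![x, y] := by
  simp only [monadPsiN, bind_assoc, pure_bind]
  rfl

theorem Fin.insertNth_comp_eq_cons {X : Type*} {m n : ℕ} {α : Fin (m + 1) → Fin (n + 1)}
    {β : Fin m → Fin n} (hβ : (α 0).succAbove ∘ β = α ∘ Fin.succ) (x : X) (v : Fin n → X) :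
    Fin.insertNth (α 0) x v ∘ α = Fin.cons x (v ∘ β) := by
  funext t
  cases t using Fin.cases with
  | zero => simp
  | succ k =>
    have hk : α k.succ = (α 0).succAbove (β k) := (congrFun hβ k).symm
    simp [hk]

theorem Fin.exists_succAbove_comp_eq {m n : ℕ} {α : Fin (m + 1) → Fin (n + 1)}
    (hα : Function.Injective α) :
    ∃ β : Fin m → Fin n, Function.Injective β ∧ (α 0).succAbove ∘ β = α ∘ Fin.succ := by
  choose β hβ using fun j : Fin m => Fin.exists_succAbove_eq (hα.ne (Fin.succ_ne_zero j))
  refine ⟨β, fun a b hab => Fin.succ_injective _ (hα ?_), funext hβ⟩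
  rw [← hβ a, ← hβ b, hab]

namespace MonadIsAffine

theorem map_const (hA : MonadIsAffine T) {X Y : Type u} (c : Y) (p : T X) :
    (fun _ => c) <$> p = pure c := by
  rw [show (fun _ : X => c) = (fun _ : PUnit => c) ∘ (fun _ => PUnit.unit) from rfl, comp_map,
    hA, map_pure]

theorem of_alphaCommutative (h : AlphaCommutative T (Fin.elim0 : Fin 0 → Fin 1)) :
    MonadIsAffine T := by
  intro X p
  have hp : (fun _ => (Fin.elim0 : Fin 0 → X)) <$> p = pure Fin.elim0 := by
    simpa [monadPsiN, Subsingleton.elim _ (Fin.elim0 : Fin 0 → X)] using h X fun _ => p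
  rw [show (fun _ : X => PUnit.unit) = (fun _ : Fin 0 → X => PUnit.unit) ∘ (fun _ => Fin.elim0)
    from rfl, comp_map, hp, map_pure]

end MonadIsAffine

theorem bind_comm_of_alphaCommutative_swap (h : AlphaCommutative T (![1, 0] : Fin 2 → Fin 2))
    {Z W : Type u} (a b : T Z) (f : Z → Z → T W) :
    (a >>= fun x => b >>= fun y => f x y) = b >>= fun y => a >>= fun x => f x y := by
  have hab : ![a, b] ∘ ![1, 0] = ![b, a] := by
    funext k
    fin_cases k <;> rfl
  have hswap := congrArg (· >>= fun v => f (v 1) (v 0)) (h Z ![a, b])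
  simp only [hab, monadPsiN_two, map_bind, map_pure, bind_assoc, pure_bind] at hswap
  simpa using hswap

namespace MonadIsCommutative

theorem bind_comm (hC : MonadIsCommutative T) {X Y Z : Type u}
    (p : T X) (q : T Y) (k : X → Y → T Z) :
    (p >>= fun x => q >>= fun y => k x y) = q >>= fun y => p >>= fun x => k x y := by
  simpa [monadPsi, monadPsi', bind_assoc] using
    congrArg (· >>= fun z => k z.1 z.2) (hC X Y p q)

theorem monadPsiN_succ_eq_insertNth (hC : MonadIsCommutative T) {X : Type u} :
    ∀ {n : ℕ} (i : Fin (n + 1)) (p : Fin (n + 1) → T X),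
      monadPsiN (n + 1) p =
        p i >>= fun x => monadPsiN n (p ∘ i.succAbove) >>= fun v => pure (i.insertNth x v)
  | n, i, p => by
    cases i using Fin.cases with
    | zero => simp [monadPsiN_succ]
    | succ j =>
      cases n with
      | zero => exact j.elim0
      | succ n =>
        have hcomp : (p ∘ j.succ.succAbove) ∘ Fin.succ = (p ∘ Fin.succ) ∘ j.succAbove := by
          funext k
          simp
        rw [monadPsiN_succ p, monadPsiN_succ (p ∘ j.succ.succAbove), hcomp,
          monadPsiN_succ_eq_insertNth hC j (p ∘ Fin.succ)]
        simp only [bind_assoc, pure_bind, Function.comp_apply, Fin.succ_succAbove_zero,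
          Fin.insertNth_succ_cons]
        exact hC.bind_comm _ _ _

theorem of_alphaCommutative_swap (h : AlphaCommutative T (![1, 0] : Fin 2 → Fin 2)) :
    MonadIsCommutative T := by
  intro X Y p q
  -- `d` is never reached: it only makes the decoding of pairs in `X ⊕ Y` total.
  let d := monadPsi p q
  have := bind_comm_of_alphaCommutative_swap h (Sum.inl <$> p) (Sum.inr <$> q)
    fun z w => Sum.elim (fun x => Sum.elim (fun _ => d) (fun y => pure (x, y)) w) (fun _ => d) z
  simpa [bind_map_left, monadPsi, monadPsi'] using this

end MonadIsCommutative

theorem alphaCommutative_of_injective (hC : MonadIsCommutative T) (hA : MonadIsAffine T) :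
    ∀ {m n : ℕ} {α : Fin m → Fin n}, Function.Injective α → AlphaCommutative T α
  | 0, n, α, _, X, p => by
    simp only [Subsingleton.elim _ (Fin.elim0 : Fin 0 → X), hA.map_const]
    rfl
  | m + 1, 0, α, _, _, _ => (α 0).elim0
  | m + 1, n + 1, α, hα, X, p => by
    obtain ⟨β, hβinj, hβ⟩ := Fin.exists_succAbove_comp_eq hα
    have hcomp : (p ∘ (α 0).succAbove) ∘ β = (p ∘ α) ∘ Fin.succ := by
      rw [Function.comp_assoc, hβ, Function.comp_assoc]
    calc (fun v => v ∘ α) <$> monadPsiN (n + 1) p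
        = p (α 0) >>= fun x => monadPsiN n (p ∘ (α 0).succAbove) >>= fun v =>
            pure (Fin.cons x (v ∘ β)) := by
          simp only [hC.monadPsiN_succ_eq_insertNth (α 0) p, map_bind, map_pure,
            Fin.insertNth_comp_eq_cons hβ]
      _ = p (α 0) >>= fun x => ((fun v => v ∘ β) <$> monadPsiN n (p ∘ (α 0).succAbove)) >>=
            fun w => pure (Fin.cons x w) := by
          simp only [bind_map_left]
      _ = monadPsiN (m + 1) (p ∘ α) := by
          rw [alphaCommutative_of_injective hC hA hβinj, hcomp, monadPsiN_succ]
          rfl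

end

/-- A monad `T` is `α`-commutative for every injective
`α : Fin m → Fin n` iff `T` is commutative and affine. -/
theorem alphaCommutative_injective_iff_commutative_and_affine
    {T : Type u → Type u} [Monad T] [LawfulMonad T] :
    (∀ (m n : ℕ) (α : Fin m → Fin n), Function.Injective α → AlphaCommutative T α) ↔
      MonadIsCommutative T ∧ MonadIsAffine T :=
  ⟨fun h => ⟨.of_alphaCommutative_swap (h 2 2 _ (by decide)),
      .of_alphaCommutative (h 0 1 _ (Function.injective_of_subsingleton _))⟩,
    fun ⟨hC, hA⟩ _ _ _ hα => alphaCommutative_of_injective hC hA hα⟩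
end

section
/- A monad T on Type u is α-commutative for every surjective function α : Fin m → Fin n (for all m, n) if and only if T is both commutative and relevant. -/
universe u

set_option linter.unusedSectionVars false

section AuxLemmas
variable {T : Type u → Type u} [Monad T] [LawfulMonad T]

lemma psiN_zero {X : Type u} (p : Fin 0 → T X) : monadPsiN 0 p = pure Fin.elim0 := rfl

lemma psiN_succ {X : Type u} (n : ℕ) (p : Fin (n + 1) → T X) :
    monadPsiN (n + 1) p
      = p 0 >>= fun x => monadPsiN n (p ∘ Fin.succ) >>= fun v => pure (Fin.cons x v) := rfl

lemma insertNth_zero' {n : ℕ} {X : Type u} (x : X) (v : Fin n → X) :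
    (0 : Fin (n + 1)).insertNth x v = (Fin.cons x v : Fin (n+1) → X) := by
  funext k
  induction k using Fin.cases with
  | zero => simpa using Fin.insertNth_apply_same (0 : Fin (n + 1)) x v
  | succ j =>
    have := Fin.insertNth_apply_succAbove (α := fun _ => X) (0 : Fin (n + 1)) x v j
    simpa [Fin.succAbove_zero] using this

lemma insertNth_succ_cons {n : ℕ} {X : Type u} (j : Fin (n + 1)) (x x0 : X)
    (w : Fin n → X) :
    (j.succ).insertNth x ((Fin.cons x0 w : Fin (n+1) → X)) = (Fin.cons x0 (j.insertNth x w : Fin (n+1) → X) : Fin (n+2) → X) := by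
  funext k
  refine j.succ.succAboveCases ?_ ?_ k
  · simp [Fin.insertNth_apply_same, Fin.cons_succ]
  · intro l
    rw [Fin.insertNth_apply_succAbove]
    induction l using Fin.cases with
    | zero => simp [Fin.succ_succAbove_zero]
    | succ m => simp [Fin.succ_succAbove_succ, Fin.cons_succ, Fin.insertNth_apply_succAbove]


lemma comm_gen (hc : MonadIsCommutative T) {A B C : Type u} (a : T A) (b : T B)
    (k : A → B → T C) :
    (a >>= fun x => b >>= fun y => k x y) = (b >>= fun y => a >>= fun x => k x y) := by
  have h := congrArg (fun t => t >>= fun z : A × B => k z.1 z.2) (hc A B a b)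
  simpa [monadPsi, monadPsi', bind_assoc] using h

lemma rel_gen (hr : MonadIsRelevant T) {A C : Type u} (a : T A) (k : A → A → T C) :
    (a >>= fun x => a >>= fun y => k x y) = (a >>= fun x => k x x) := by
  have h := congrArg (fun t => t >>= fun z : A × A => k z.1 z.2) (hr A a)
  simpa [monadPsi, bind_assoc, bind_map_left] using h

lemma absorb (hc : MonadIsCommutative T) (hr : MonadIsRelevant T) {X : Type u} :
    ∀ (n : ℕ) (p : Fin n → T X) (i : Fin n) (C : Type u) (k : X → (Fin n → X) → T C),
      (p i >>= fun x => monadPsiN n p >>= fun w => k x w)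
        = monadPsiN n p >>= fun w => k (w i) w := by
  intro n
  induction n with
  | zero => intro p i C k; exact i.elim0
  | succ n ih =>
    intro p i C k
    induction i using Fin.cases with
    | zero =>
      rw [psiN_succ]
      simp only [bind_assoc, pure_bind]
      rw [rel_gen hr (p 0)
        (fun x y => monadPsiN n (p ∘ Fin.succ) >>= fun v => k x (Fin.cons y v))]
      simp [Fin.cons_zero]
    | succ j =>
      rw [psiN_succ]
      simp only [bind_assoc, pure_bind]
      rw [comm_gen hc (p j.succ) (p 0)
        (fun x y => monadPsiN n (p ∘ Fin.succ) >>= fun v => k x (Fin.cons y v))]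
      refine bind_congr fun y => ?_
      have := ih (p ∘ Fin.succ) j C (fun x v => k x (Fin.cons y v))
      simpa [Fin.cons_succ] using this

lemma extract (hc : MonadIsCommutative T) {X : Type u} :
    ∀ (n : ℕ) (p : Fin (n + 1) → T X) (i : Fin (n + 1)),
      monadPsiN (n + 1) p
        = p i >>= fun x =>
            monadPsiN n (p ∘ i.succAbove) >>= fun v => pure (i.insertNth x v) := by
  intro n
  induction n with
  | zero =>
    intro p i
    have hi : i = 0 := Fin.fin_one_eq_zero i
    subst hi
    rw [psiN_succ]
    simp [psiN_zero, insertNth_zero', Fin.succAbove_zero]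
  | succ n ih =>
    intro p i
    induction i using Fin.cases with
    | zero =>
      rw [psiN_succ]
      simp [insertNth_zero', Fin.succAbove_zero]
    | succ j =>
      rw [psiN_succ, ih (p ∘ Fin.succ) j]
      simp only [bind_assoc, pure_bind]
      rw [comm_gen hc (p 0) ((p ∘ Fin.succ) j)
        (fun x0 x => monadPsiN n ((p ∘ Fin.succ) ∘ j.succAbove) >>= fun w =>
          pure (Fin.cons x0 ((j.insertNth x w : Fin (n+1) → X)) : Fin (n+2) → X))]
      have hq : (p ∘ j.succ.succAbove) ∘ Fin.succ = (p ∘ Fin.succ) ∘ j.succAbove := by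
        funext l
        simp [Function.comp, Fin.succ_succAbove_succ]
      have h0 : (p ∘ j.succ.succAbove) 0 = p 0 := by
        simp [Function.comp, Fin.succ_succAbove_zero]
      rw [psiN_succ n (p ∘ j.succ.succAbove), hq, h0]
      simp only [bind_assoc, pure_bind]
      refine bind_congr fun x => ?_
      refine bind_congr fun x0 => ?_
      refine bind_congr fun w => ?_
      rw [insertNth_succ_cons]


lemma rev (hc : MonadIsCommutative T) (hr : MonadIsRelevant T) :
    ∀ (m n : ℕ) (α : Fin m → Fin n), Function.Surjective α → AlphaCommutative T α := by
  intro m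
  induction m with
  | zero =>
    intro n α hs X p
    cases n with
    | zero =>
      rw [psiN_zero, psiN_zero, map_pure]
      exact congrArg pure (funext fun i => i.elim0)
    | succ n => exact absurd (hs 0) (by rintro ⟨a, -⟩; exact a.elim0)
  | succ m ih =>
    intro n α hs X p
    cases n with
    | zero => exact (α 0).elim0
    | succ n =>
      by_cases hcov : ∃ j : Fin m, α j.succ = α 0
      · -- the tail is still surjective
        have hts : Function.Surjective (α ∘ Fin.succ) := by
          intro c
          obtain ⟨a, ha⟩ := hs c
          obtain rfl | ⟨j, rfl⟩ := Fin.eq_zero_or_eq_succ a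
          · obtain ⟨j, hj⟩ := hcov
            exact ⟨j, by simpa [Function.comp] using hj.trans ha⟩
          · exact ⟨j, ha⟩
        have hIH := ih (n + 1) (α ∘ Fin.succ) hts X p
        rw [psiN_succ m (p ∘ α)]
        have hcomp : (p ∘ α) ∘ Fin.succ = p ∘ (α ∘ Fin.succ) := rfl
        rw [hcomp, ← hIH]
        simp only [bind_map_left]
        rw [show ((p ∘ α) 0 : T X) = p (α 0) from rfl]
        rw [absorb hc hr (n + 1) p (α 0) _
          (fun x w => pure (Fin.cons x (w ∘ (α ∘ Fin.succ)) : Fin (m+1) → X))]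
        rw [map_eq_pure_bind]
        refine bind_congr fun w => ?_
        exact congrArg pure (Fin.cons_self_tail (w ∘ α)).symm
      · -- α 0 is only hit at 0
        push_neg at hcov
        have hβex : ∀ j : Fin m, ∃ d : Fin n, (α 0).succAbove d = α j.succ :=
          fun j => Fin.exists_succAbove_eq (hcov j)
        choose β hβ using hβex
        have hβs : Function.Surjective β := by
          intro d
          obtain ⟨a, ha⟩ := hs ((α 0).succAbove d)
          obtain rfl | ⟨j, rfl⟩ := Fin.eq_zero_or_eq_succ a
          · exact absurd ha.symm (Fin.succAbove_ne (α 0) d)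
          · exact ⟨j, Fin.succAbove_right_injective (p := α 0) ((hβ j).trans ha)⟩
        have hIH := ih n β hβs X (p ∘ (α 0).succAbove)
        rw [extract hc n p (α 0), psiN_succ m (p ∘ α)]
        have hpq : (p ∘ α) ∘ Fin.succ = (p ∘ (α 0).succAbove) ∘ β := by
          funext j
          simp [Function.comp, hβ j]
        rw [hpq, ← hIH]
        simp only [map_bind, map_pure, bind_map_left]
        rw [show ((p ∘ α) 0 : T X) = p (α 0) from rfl]
        refine bind_congr fun x => ?_
        refine bind_congr fun v => ?_
        refine congrArg pure (funext fun i => ?_)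
        induction i using Fin.cases with
        | zero =>
          simpa [Function.comp] using Fin.insertNth_apply_same (α 0) x v
        | succ j =>
          have h1 : ((α 0).insertNth x v ∘ α) j.succ = v (β j) := by
            simp only [Function.comp_apply, ← hβ j]
            exact Fin.insertNth_apply_succAbove (α := fun _ => X) (α 0) x v (β j)
          simpa [Fin.cons_succ] using h1

lemma fwd_rel
    (H : ∀ (m n : ℕ) (α : Fin m → Fin n), Function.Surjective α → AlphaCommutative T α) :
    MonadIsRelevant T := by
  intro X p
  have hs : Function.Surjective (fun _ : Fin 2 => (0 : Fin 1)) := by decide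
  have h := H 2 1 (fun _ => 0) hs X (fun _ => p)
  have h2 := congrArg (fun t => (fun v : Fin 2 → X => (v 0, v 1)) <$> t) h
  simp only [psiN_succ, psiN_zero, map_bind, map_pure, bind_assoc, pure_bind,
    Function.comp] at h2
  simp only [Fin.cons_zero, Fin.cons_succ] at h2
  rw [monadPsi]
  rw [show ((fun x : X => (x, x)) <$> p) = p >>= fun x => pure (x, x) from map_eq_pure_bind _ _]
  -- h2 should be close to the goal reversed
  refine Eq.trans ?_ (h2.symm.trans ?_)
  · refine bind_congr fun x => bind_congr fun y => ?_
    simp [Fin.cons_zero, Fin.cons_succ]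
  · refine bind_congr fun x => ?_
    simp [Fin.cons_zero, Fin.cons_succ]

lemma fwd_comm
    (H : ∀ (m n : ℕ) (α : Fin m → Fin n), Function.Surjective α → AlphaCommutative T α) :
    MonadIsCommutative T := by
  have hom : ∀ (Z : Type u) (a b : T Z), monadPsi a b = monadPsi' a b := by
    intro Z a b
    have hs : Function.Surjective (![1, 0] : Fin 2 → Fin 2) := by decide
    have h := H 2 2 ![1, 0] hs Z ![a, b]
    have h2 := congrArg (fun t => (fun v : Fin 2 → Z => (v 1, v 0)) <$> t) h
    simp only [psiN_succ, psiN_zero, map_bind, map_pure, bind_assoc, pure_bind,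
      Function.comp] at h2
    simp only [Matrix.cons_val_zero, Matrix.cons_val_one, Matrix.head_cons,
      Fin.succ_zero_eq_one, Fin.cons_zero, Fin.cons_succ] at h2
    rw [monadPsi, monadPsi']
    refine Eq.trans ?_ (h2.trans ?_)
    · refine bind_congr fun x => bind_congr fun y => ?_
      norm_num
    · refine bind_congr fun y => bind_congr fun x => ?_
      norm_num
  -- now the heterogeneous case
  intro X Y p q
  have hom' : ∀ (C : Type u) (a b : T (X ⊕ Y)) (k : X ⊕ Y → X ⊕ Y → T C),
      (a >>= fun x => b >>= fun y => k x y) = (b >>= fun y => a >>= fun x => k x y) := by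
    intro C a b k
    have h := congrArg (fun t => t >>= fun z : (X ⊕ Y) × (X ⊕ Y) => k z.1 z.2) (hom _ a b)
    simpa [monadPsi, monadPsi', bind_assoc] using h
  let k : X ⊕ Y → X ⊕ Y → T (X × Y) := fun z w =>
    match z, w with
    | .inl x, .inr y => pure (x, y)
    | _, _ => monadPsi p q
  have h := hom' (X × Y) (Sum.inl <$> p) (Sum.inr <$> q) k
  simp only [bind_map_left] at h
  rw [monadPsi, monadPsi']
  exact h

end AuxLemmas

/-- A monad `T` is `α`-commutative for every surjective
`α : Fin m → Fin n` iff `T` is commutative and relevant. -/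
theorem alphaCommutative_surjective_iff_commutative_and_relevant
    {T : Type u → Type u} [Monad T] [LawfulMonad T] :
    (∀ (m n : ℕ) (α : Fin m → Fin n), Function.Surjective α → AlphaCommutative T α) ↔
      MonadIsCommutative T ∧ MonadIsRelevant T := by
  constructor
  · intro H
    exact ⟨fwd_comm H, fwd_rel H⟩
  · rintro ⟨hc, hr⟩ m n α hs
    exact rev hc hr m n α hs
end

section
/- A monad T on Type u is α-commutative for every function α : Fin m → Fin n (for all m, n) if and only if T is hyperaffine, i.e., both affine and relevant. -/
universe u

section Aux
variable {T : Type u → Type u} [Monad T] [LawfulMonad T]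

theorem my_discard (hA : MonadIsAffine T) {X Y : Type u} (p : T X) (r : T Y) :
    p >>= (fun _ => r) = r := by
  have h := congrArg (fun t => t >>= fun _ => r) (hA X p)
  simp only [map_eq_pure_bind, bind_assoc, pure_bind] at h
  exact h

theorem my_dup (hR : MonadIsRelevant T) {X Z : Type u} (p : T X) (k : X → X → T Z) :
    (do let x ← p; let y ← p; k x y) = p >>= fun x => k x x := by
  have h := congrArg (fun t => t >>= fun z : X × X => k z.1 z.2) (hR X p)
  simp only [monadPsi, map_eq_pure_bind, bind_assoc, pure_bind] at h
  exact h
theorem my_swap (hA : MonadIsAffine T) (hR : MonadIsRelevant T) {X Y Z : Type u}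
    (p : T X) (q : T Y) (k : X → Y → T Z) :
    (p >>= fun x => q >>= fun y => k x y) = (q >>= fun y => p >>= fun x => k x y) := by
  have h := my_dup hR (monadPsi p q)
      (fun z w => (pure (w.1, z.2) : T (X × Y)))
  simp only [monadPsi, bind_assoc, pure_bind] at h
  have haux : (p >>= fun _ => q >>= fun y => p >>= fun x' => q >>= fun _ =>
        (pure (x', y) : T (X × Y))) =
      (q >>= fun y => p >>= fun x' => (pure (x', y) : T (X × Y))) := by
    calc (p >>= fun _ => q >>= fun y => p >>= fun x' => q >>= fun _ =>
          (pure (x', y) : T (X × Y)))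
        = (p >>= fun _ => q >>= fun y => p >>= fun x' =>
            (pure (x', y) : T (X × Y))) := by
          simp only [my_discard hA]
      _ = (q >>= fun y => p >>= fun x' => (pure (x', y) : T (X × Y))) := by
          exact my_discard hA p _
  rw [haux] at h
  have h2 := congrArg (fun t => t >>= fun z : X × Y => k z.1 z.2) h
  simp only [bind_assoc, pure_bind] at h2
  exact h2.symm
theorem my_key (hA : MonadIsAffine T) (hR : MonadIsRelevant T) {X Z : Type u} :
    ∀ (n : ℕ) (p : Fin n → T X) (j : Fin n) (k : X → (Fin n → X) → T Z),
      (p j >>= fun x => monadPsiN n p >>= fun w => k x w) =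
        monadPsiN n p >>= fun w => k (w j) w := by
  intro n
  induction n with
  | zero => intro p j; exact j.elim0
  | succ n ih =>
    intro p j k
    induction j using Fin.cases with
    | zero =>
      simp only [monadPsiN, bind_assoc, pure_bind]
      have h := my_dup hR (p 0) (fun x y =>
        monadPsiN n (p ∘ Fin.succ) >>= fun v => k x (Fin.cons y v))
      simp only [Fin.cons_zero]
      exact h
    | succ j' =>
      simp only [monadPsiN, bind_assoc, pure_bind]
      rw [my_swap hA hR (p j'.succ) (p 0)]
      have h : ∀ y : X,
          ((p ∘ Fin.succ) j' >>= fun x => monadPsiN n (p ∘ Fin.succ) >>= fun v =>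
            k x (Fin.cons y v)) =
          monadPsiN n (p ∘ Fin.succ) >>= fun v => k (v j') (Fin.cons y v) :=
        fun y => ih (p ∘ Fin.succ) j' (fun x v => k x (Fin.cons y v))
      simp only [Function.comp_apply] at h
      simp only [h, Fin.cons_succ]
theorem my_const_map (hA : MonadIsAffine T) {X Y : Type u} (p : T X) (c : Y) :
    (fun _ => c) <$> p = pure c := by
  have h := congrArg (fun t => t >>= fun _ => (pure c : T Y)) (hA X p)
  simp only [map_eq_pure_bind, bind_assoc, pure_bind] at h ⊢
  exact h

end Aux

/-- A monad `T` is `α`-commutative for every function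
`α : Fin m → Fin n` iff `T` is hyperaffine, i.e. both affine and relevant. -/
theorem alphaCommutative_all_iff_hyperaffine
    {T : Type u → Type u} [Monad T] [LawfulMonad T] :
    (∀ (m n : ℕ) (α : Fin m → Fin n), AlphaCommutative T α) ↔
      MonadIsAffine T ∧ MonadIsRelevant T := by
  constructor
  · intro h
    constructor
    · intro X p
      have h01 := h 0 1 Fin.elim0 X (fun _ => p)
      have h2 := congrArg (fun t => (fun _ => PUnit.unit.{u+1}) <$> t) h01
      simp only [monadPsiN, map_eq_pure_bind, bind_assoc, pure_bind] at h2 ⊢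
      exact h2
    · intro X p
      have h21 := h 2 1 (fun _ => (0 : Fin 1)) X (fun _ => p)
      have h2 := congrArg
        (fun t => (fun v : Fin 2 → X => (v 0, v (Fin.succ 0))) <$> t) h21
      simp only [monadPsiN, map_eq_pure_bind, bind_assoc, pure_bind,
        Function.comp, Fin.cons_zero, Fin.cons_succ] at h2
      simp only [monadPsi, map_eq_pure_bind]
      exact h2.symm
  · rintro ⟨hA, hR⟩ m
    induction m with
    | zero =>
      intro n α X p
      have : (fun v : Fin n → X => v ∘ α) = fun _ => Fin.elim0 := by
        funext v; funext i; exact i.elim0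
      rw [this, my_const_map hA]
      rfl
    | succ m ih =>
      intro n α X p
      have hrec := ih n (α ∘ Fin.succ) X p
      show _ = monadPsiN (m+1) (p ∘ α)
      simp only [monadPsiN]
      have hcomp : (p ∘ α) ∘ Fin.succ = p ∘ (α ∘ Fin.succ) := rfl
      rw [hcomp, ← hrec]
      have hkey := my_key hA hR n p (α 0)
        (fun x w => (pure (Fin.cons x (w ∘ α ∘ Fin.succ)) : T (Fin (m+1) → X)))
      simp only [map_eq_pure_bind, bind_assoc, pure_bind, Function.comp_apply] at hkey ⊢
      rw [hkey]
      congr 1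
      funext w
      congr 1
      funext i
      induction i using Fin.cases with
      | zero => simp [Fin.cons_zero, Function.comp]
      | succ i' => simp [Fin.cons_succ, Function.comp]
end

section
/- Let T be a commutative monad on Type u. For each type X there exists a unique map δ_X : Multiset (T X) → T (Multiset X) such that for every list l : List (T X), δ_X (↑l) = (fun xs : List X => (↑xs : Multiset X)) <$> seq l, where seq is the list-sequencing map (seq [] = pure [], seq (t :: l) = do {x ← t; xs ← seq l; pure (x :: xs)}); and the family δ is a distributive law of the finite multiset monad (with pure x = {x}, functorial action Multiset.map, and join = Multiset.join) over the monad T. -/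
universe u

/-- List sequencing for a monad. -/
def seqList {T : Type u → Type u} [Monad T] {X : Type u} : List (T X) → T (List X)
  | [] => pure []
  | t :: l => do
    let x ← t
    let xs ← seqList l
    pure (x :: xs)

/-- `δ` is a family of multiset-sequencing maps: on (the image of) each list it is
given by list sequencing followed by passing to multisets. -/
def IsMultisetSeq (T : Type u → Type u) [Monad T]
    (δ : (X : Type u) → Multiset (T X) → T (Multiset X)) : Prop :=
  ∀ (X : Type u) (l : List (T X)),
    δ X (↑l : Multiset (T X)) =
      (fun xs : List X => (↑xs : Multiset X)) <$> seqList l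


section Aux

variable {T : Type u → Type u} [Monad T] [LawfulMonad T]

theorem bindComm (hcomm : MonadIsCommutative T) {X Y Z : Type u} (p : T X) (q : T Y)
    (k : X → Y → T Z) :
    (p >>= fun x => q >>= fun y => k x y) = (q >>= fun y => p >>= fun x => k x y) := by
  have h := congrArg (fun m : T (X × Y) => m >>= fun z => k z.1 z.2) (hcomm X Y p q)
  simpa [monadPsi, monadPsi', bind_assoc] using h

omit [LawfulMonad T] in
theorem mbind_congr {X Y : Type u} {p : T X} {f g : X → T Y} (h : ∀ a, f a = g a) :
    p >>= f = p >>= g := by rw [funext h]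

theorem mbind_map_left {X Y Z : Type u} (f : X → Y) (p : T X) (g : Y → T Z) :
    (f <$> p) >>= g = p >>= fun a => g (f a) := by
  rw [← bind_pure_comp, bind_assoc]; simp

theorem map_coe_seqList_cons {X : Type u} (x : T X) (l : List (T X)) :
    (fun xs : List X => (↑xs : Multiset X)) <$> seqList (x :: l) =
      x >>= fun a => (fun m : Multiset X => a ::ₘ m) <$>
        ((fun xs : List X => (↑xs : Multiset X)) <$> seqList l) := by
  simp [seqList, map_bind, Functor.map_map]

theorem coe_seqList_perm (hcomm : MonadIsCommutative T) {X : Type u}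
    {l l' : List (T X)} (h : l.Perm l') :
    (fun xs : List X => (↑xs : Multiset X)) <$> seqList l =
      (fun xs : List X => (↑xs : Multiset X)) <$> seqList l' := by
  induction h with
  | nil => rfl
  | cons x h ih => rw [map_coe_seqList_cons, map_coe_seqList_cons, ih]
  | swap x y l =>
    simp only [seqList, map_bind, bind_assoc, pure_bind, map_pure]
    rw [bindComm hcomm]
    refine mbind_congr fun a => mbind_congr fun b => mbind_congr fun c => ?_
    exact congrArg pure (Multiset.coe_eq_coe.mpr (List.Perm.swap a b c))
  | trans _ _ ih1 ih2 => exact ih1.trans ih2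

variable {δ : (X : Type u) → Multiset (T X) → T (Multiset X)}
  (hδ : IsMultisetSeq T δ)

include hδ

theorem delta_zero {X : Type u} : δ X 0 = pure 0 := by
  simpa [seqList] using hδ X []

theorem delta_cons {X : Type u} (x : T X) (s : Multiset (T X)) :
    δ X (x ::ₘ s) = x >>= fun a => (fun m : Multiset X => a ::ₘ m) <$> δ X s := by
  refine Quotient.inductionOn s fun l => ?_
  have h1 : (Quotient.mk _ l : Multiset (T X)) = (↑l : Multiset (T X)) := rfl
  rw [h1, show (x ::ₘ (↑l : Multiset (T X))) = ↑(x :: l) from Multiset.cons_coe x l, hδ, map_coe_seqList_cons]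
  simp [hδ X l]

theorem delta_add {X : Type u} (u v : Multiset (T X)) :
    δ X (u + v) = δ X u >>= fun p => δ X v >>= fun q => pure (p + q) := by
  induction u using Multiset.induction with
  | empty => rw [zero_add, delta_zero hδ, pure_bind]; simp
  | cons a u ih =>
    rw [Multiset.cons_add, delta_cons hδ, ih, delta_cons hδ]
    simp only [map_bind, map_pure, bind_pure_comp, bind_assoc, Functor.map_map, mbind_map_left]
    refine mbind_congr fun x => mbind_congr fun p => ?_
    congr 1
    funext q
    exact (Multiset.cons_add x p q).symm

end Aux

/-- For a commutative monad `T`, there is a unique family of maps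
`δ X : Multiset (T X) → T (Multiset X)` computing on lists as list sequencing, and
this family is a distributive law of the finite multiset monad (with unit `x ↦ {x}`,
functorial action `Multiset.map`, and multiplication `Multiset.join`) over `T`. -/

theorem multisetSeq_existsUnique_and_isDistributiveLaw
    {T : Type u → Type u} [Monad T] [LawfulMonad T] (hcomm : MonadIsCommutative T) :
    (∃! δ : (X : Type u) → Multiset (T X) → T (Multiset X), IsMultisetSeq T δ) ∧
    (∀ δ : (X : Type u) → Multiset (T X) → T (Multiset X), IsMultisetSeq T δ →
      -- naturality
      (∀ (X Y : Type u) (f : X → Y) (s : Multiset (T X)),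
        δ Y (s.map (Functor.map f)) = Multiset.map f <$> δ X s) ∧
      -- compatibility with the unit of S
      (∀ (X : Type u) (t : T X),
        δ X {t} = (fun x : X => ({x} : Multiset X)) <$> t) ∧
      -- compatibility with the multiplication of S
      (∀ (X : Type u) (s : Multiset (Multiset (T X))),
        δ X s.join =
          (Multiset.join : Multiset (Multiset X) → Multiset X) <$>
            δ (Multiset X) (s.map (δ X))) ∧
      -- compatibility with the unit of T
      (∀ (X : Type u) (s : Multiset X),
        δ X (s.map (pure : X → T X)) = pure s) ∧
      -- compatibility with the multiplication of T
      (∀ (X : Type u) (s : Multiset (T (T X))),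
        δ X (s.map (monadJoin : T (T X) → T X)) =
          monadJoin (δ X <$> δ (T X) s))) := by

  classical
  have key : ∀ (δ : (X : Type u) → Multiset (T X) → T (Multiset X)), IsMultisetSeq T δ →
      (∀ (X Y : Type u) (f : X → Y) (s : Multiset (T X)),
        δ Y (s.map (Functor.map f)) = Multiset.map f <$> δ X s) ∧
      (∀ (X : Type u) (t : T X),
        δ X {t} = (fun x : X => ({x} : Multiset X)) <$> t) ∧
      (∀ (X : Type u) (s : Multiset (Multiset (T X))),
        δ X s.join =
          (Multiset.join : Multiset (Multiset X) → Multiset X) <$>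
            δ (Multiset X) (s.map (δ X))) ∧
      (∀ (X : Type u) (s : Multiset X),
        δ X (s.map (pure : X → T X)) = pure s) ∧
      (∀ (X : Type u) (s : Multiset (T (T X))),
        δ X (s.map (monadJoin : T (T X) → T X)) =
          monadJoin (δ X <$> δ (T X) s)) := by
    intro δ hδ
    refine ⟨?_, ?_, ?_, ?_, ?_⟩
    · intro X Y f s
      induction s using Multiset.induction with
      | empty => simp [delta_zero hδ]
      | cons a s ih =>
        simp [delta_cons hδ, ih, map_bind, bind_map_left, Functor.map_map]
    · intro X t
      have : ({t} : Multiset (T X)) = t ::ₘ 0 := rfl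
      rw [this, delta_cons hδ, delta_zero hδ]
      simp [← bind_pure_comp]
    · intro X s
      induction s using Multiset.induction with
      | empty => simp [delta_zero hδ]
      | cons a s ih =>
        simp [Multiset.join_cons, delta_add hδ, delta_cons hδ, ih, map_bind,
          bind_assoc, Functor.map_map]
    · intro X s
      induction s using Multiset.induction with
      | empty => simp [delta_zero hδ]
      | cons a s ih =>
        simp [delta_cons hδ, ih]
    · intro X s
      induction s using Multiset.induction with
      | empty => simp [delta_zero hδ, monadJoin]
      | cons a s ih =>
        rw [Multiset.map_cons, delta_cons hδ, ih, delta_cons hδ]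
        simp only [monadJoin, map_bind, bind_assoc, Functor.map_map, mbind_map_left,
          id_eq, id, delta_cons hδ]
        refine mbind_congr fun p => ?_
        exact bindComm hcomm p (δ (T X) s) _
  constructor
  · refine ⟨fun X => Quot.lift
      (fun l : List (T X) => (fun xs : List X => (↑xs : Multiset X)) <$> seqList l)
      (fun a b h => coe_seqList_perm hcomm h), fun X l => rfl, ?_⟩
    intro δ' hδ'
    funext X s
    refine Quotient.inductionOn s fun l => ?_
    exact (hδ' X l).trans rfl
  · exact key
end
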